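/- arXiv:1511.04876 — 2 statements merged into one kernel-verified Lean document; each statement's English description precedes it below -/
import Mathlib

section
/- Let p ∉ S_0 be an odd prime such that the p-adic valuation of d is 0 and the p-adic valuation of Δ_{i,j} is 0 for all i ≠ j. Let (t,s,x,y) ∈ ℤ_p⁴ with t, s not both in p·ℤ_p satisfy a·p_𝓐(t,s)·x² + b·p_𝓑(t,s)·y² = 1. Then for every i ∈ 𝓘, either a·D^𝓐_i is a square in ℚ_p or val_p(p_i(t,s)) = 0; in particular val_p(p_i(t,s)) is even whenever a·D^𝓐_i is not a square in ℚ_p. -/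
noncomputable section

/-- The field `ℚ_p`, with the primality assumption as an explicit argument. -/
def Qp (p : ℕ) (hp : p.Prime) : Type := @Padic p ⟨hp⟩

noncomputable instance (p : ℕ) (hp : p.Prime) : NormedField (Qp p hp) :=
  letI : Fact p.Prime := ⟨hp⟩
  inferInstanceAs (NormedField ℚ_[p])

/-- The ring of `S`-integers of `ℚ` (the archimedean place is implicit). -/
def ZS (S : Finset ℕ) : Set ℚ :=
  {x : ℚ | ∀ p : ℕ, p.Prime → p ∉ S → 0 ≤ padicValRat p x}

/-- Coprimality in `ℤ_S`: generating the unit ideal. -/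
def CoprimeZS (S : Finset ℕ) (c d : ℚ) : Prop :=
  ∃ u v : ℚ, u ∈ ZS S ∧ v ∈ ZS S ∧ u * c + v * d = 1

/-- `p_𝓙(t,s) = ∏_{j ∈ 𝓙} (c_j t + d_j s)`. -/
def pJ {I F : Type*} [Field F] (cc dd : I → ℚ) (J : Finset I) (t s : F) : F :=
  ∏ j ∈ J, ((cc j : F) * t + (dd j : F) * s)

/-- `D^𝓙_i` (for `e = d`) and `D̂^𝓙_i` (for `e = −d`). -/
def Dgen {I : Type*} [Fintype I] [DecidableEq I] (cc dd : I → ℚ) (e : ℚ)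
    (J : Finset I) (i : I) : ℚ :=
  if i ∈ J then e * pJ cc dd Jᶜ (dd i) (-(cc i)) else pJ cc dd J (dd i) (-(cc i))

/-- The equation `E : a·p_𝓐(t,s)·x² + b·p_𝓑(t,s)·y² = 1` (with `𝓑 = 𝓐ᶜ`). -/
def EqnE {I : Type*} [Fintype I] [DecidableEq I] {F : Type*} [Field F]
    (cc dd : I → ℚ) (A : Finset I) (a b : ℚ) (t s x y : F) : Prop :=
  (a : F) * pJ cc dd A t s * x ^ 2 + (b : F) * pJ cc dd Aᶜ t s * y ^ 2 = 1


/-- The `p`-adic valuation of an element of `ℚ_p`. -/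
noncomputable def QpVal (p : ℕ) (hp : p.Prime) (x : Qp p hp) : ℤ :=
  letI : Fact p.Prime := ⟨hp⟩
  Padic.valuation (x : ℚ_[p])

/-!
Congruences modulo `p` are written as `‖u - v‖ < 1`. If `p_i(t,s) ≡ 0`, then since one of
`c_i, d_i` is a unit, `(t, s) ≡ μ • (d_i, -c_i)` for some integral `μ`, hence
`p_𝓙(t,s) ≡ μ ^ |𝓙| * p_𝓙(d_i, -c_i)` for every `𝓙`. The summand of the equation containing
`p_i` is `≡ 0`, so the other one, `β * p_𝓙(t,s) * z²` with `|𝓙|` even, is `≡ 1`. Thus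
`β * p_𝓙(d_i, -c_i) * (μ ^ (|𝓙|/2) * z)² ≡ 1`, and Hensel's lemma (`p` odd) makes
`β * p_𝓙(d_i, -c_i)` a square; it equals `a * D^𝓐_i` up to the square `a²`.
-/

open IsUltrametricDist

section Ultrametric

variable {K I : Type*} [NormedField K]

lemma exists_near_mul_of_norm_mul_add_mul_lt_one {c d t s : K} (hcd : ‖c‖ = 1 ∨ ‖d‖ = 1)
    (ht : ‖t‖ ≤ 1) (hs : ‖s‖ ≤ 1) (h : ‖c * t + d * s‖ < 1) :
    ∃ μ : K, ‖μ‖ ≤ 1 ∧ ‖t - μ * d‖ < 1 ∧ ‖s - μ * -c‖ < 1 := by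
  rcases hcd with hc | hd
  · have hc0 : c ≠ 0 := norm_ne_zero_iff.mp (by rw [hc]; exact one_ne_zero)
    refine ⟨-(s / c), by rwa [norm_neg, norm_div, hc, div_one], ?_, ?_⟩
    · rwa [show t - -(s / c) * d = (c * t + d * s) / c by field_simp; ring, norm_div, hc, div_one]
    · rw [neg_mul_neg, div_mul_cancel₀ s hc0, sub_self, norm_zero]; exact one_pos
  · have hd0 : d ≠ 0 := norm_ne_zero_iff.mp (by rw [hd]; exact one_ne_zero)
    refine ⟨t / d, by rwa [norm_div, hd, div_one],
      by rw [div_mul_cancel₀ t hd0, sub_self, norm_zero]; exact one_pos, ?_⟩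
    rwa [show s - t / d * -c = (c * t + d * s) / d by field_simp; ring, norm_div, hd, div_one]

lemma ratCast_pJ [CharZero K] (cc dd : I → ℚ) (J : Finset I) (t s : ℚ) :
    ((pJ cc dd J t s : ℚ) : K) = pJ cc dd J (t : K) (s : K) := by
  simp [pJ]

lemma pJ_mul_mul (cc dd : I → ℚ) (J : Finset I) (μ t s : K) :
    pJ cc dd J (μ * t) (μ * s) = μ ^ J.card * pJ cc dd J t s := by
  rw [pJ, pJ, ← Finset.prod_const, ← Finset.prod_mul_distrib]
  exact Finset.prod_congr rfl fun _ _ => by ring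

variable [IsUltrametricDist K]

lemma norm_mul_add_mul_le_max {c d : K} (hc : ‖c‖ ≤ 1) (hd : ‖d‖ ≤ 1) (x y : K) :
    ‖c * x + d * y‖ ≤ max ‖x‖ ‖y‖ := by
  refine (norm_add_le_max _ _).trans (max_le_max ?_ ?_) <;> rw [norm_mul]
  exacts [mul_le_of_le_one_left (norm_nonneg _) hc, mul_le_of_le_one_left (norm_nonneg _) hd]

lemma norm_prod_sub_prod_lt_one (J : Finset I) {f g : I → K} (hf : ∀ j ∈ J, ‖f j‖ ≤ 1)
    (hg : ∀ j ∈ J, ‖g j‖ ≤ 1) (hfg : ∀ j ∈ J, ‖f j - g j‖ < 1) :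
    ‖∏ j ∈ J, f j - ∏ j ∈ J, g j‖ < 1 := by
  classical
  induction J using Finset.cons_induction with
  | empty => simp
  | cons i J hi ih =>
    simp only [Finset.forall_mem_cons] at hf hg hfg
    have hgJ : ‖∏ j ∈ J, g j‖ ≤ 1 := by
      rw [norm_prod]; exact Finset.prod_le_one (fun _ _ => norm_nonneg _) hg.2
    rw [Finset.prod_cons, Finset.prod_cons, show f i * ∏ j ∈ J, f j - g i * ∏ j ∈ J, g j =
      f i * (∏ j ∈ J, f j - ∏ j ∈ J, g j) + (∏ j ∈ J, g j) * (f i - g i) by ring]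
    exact (norm_mul_add_mul_le_max hf.1 hgJ _ _).trans_lt (max_lt (ih hf.2 hg.2 hfg.2) hfg.1)

variable {cc dd : I → ℚ}

lemma norm_linear_le_one (hcc : ∀ j, ‖(cc j : K)‖ ≤ 1) (hdd : ∀ j, ‖(dd j : K)‖ ≤ 1)
    {t s : K} (ht : ‖t‖ ≤ 1) (hs : ‖s‖ ≤ 1) (j : I) : ‖(cc j : K) * t + (dd j : K) * s‖ ≤ 1 :=
  (norm_mul_add_mul_le_max (hcc j) (hdd j) t s).trans (max_le ht hs)

lemma norm_pJ_le_one (hcc : ∀ j, ‖(cc j : K)‖ ≤ 1) (hdd : ∀ j, ‖(dd j : K)‖ ≤ 1)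
    (J : Finset I) {t s : K} (ht : ‖t‖ ≤ 1) (hs : ‖s‖ ≤ 1) : ‖pJ cc dd J t s‖ ≤ 1 := by
  rw [pJ, norm_prod]
  exact Finset.prod_le_one (fun _ _ => norm_nonneg _)
    fun j _ => norm_linear_le_one hcc hdd ht hs j

lemma norm_pJ_lt_one_of_mem (hcc : ∀ j, ‖(cc j : K)‖ ≤ 1) (hdd : ∀ j, ‖(dd j : K)‖ ≤ 1)
    {J : Finset I} {i : I} (hi : i ∈ J) {t s : K} (ht : ‖t‖ ≤ 1) (hs : ‖s‖ ≤ 1)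
    (hlt : ‖(cc i : K) * t + (dd i : K) * s‖ < 1) : ‖pJ cc dd J t s‖ < 1 := by
  classical
  rw [pJ, ← Finset.mul_prod_erase _ _ hi, norm_mul]
  exact mul_lt_one_of_nonneg_of_lt_one_left (norm_nonneg _) hlt
    (norm_pJ_le_one hcc hdd (J.erase i) ht hs)

lemma norm_pJ_sub_pJ_lt_one (hcc : ∀ j, ‖(cc j : K)‖ ≤ 1) (hdd : ∀ j, ‖(dd j : K)‖ ≤ 1)
    (J : Finset I) {t s t' s' : K} (ht : ‖t‖ ≤ 1) (hs : ‖s‖ ≤ 1) (ht' : ‖t'‖ ≤ 1)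
    (hs' : ‖s'‖ ≤ 1) (htt' : ‖t - t'‖ < 1) (hss' : ‖s - s'‖ < 1) :
    ‖pJ cc dd J t s - pJ cc dd J t' s'‖ < 1 := by
  refine norm_prod_sub_prod_lt_one J (fun j _ => norm_linear_le_one hcc hdd ht hs j)
    (fun j _ => norm_linear_le_one hcc hdd ht' hs' j) fun j _ => ?_
  rw [show (cc j : K) * t + (dd j : K) * s - ((cc j : K) * t' + (dd j : K) * s') =
    (cc j : K) * (t - t') + (dd j : K) * (s - s') by ring]
  exact (norm_mul_add_mul_le_max (hcc j) (hdd j) _ _).trans_lt (max_lt htt' hss')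

end Ultrametric

namespace Padic

variable {p : ℕ} [Fact p.Prime]

open Polynomial in
lemma isSquare_of_norm_sub_one_lt_one (hp2 : p ≠ 2) {v : ℚ_[p]} (hv : ‖v - 1‖ < 1) :
    IsSquare v := by
  have hv1 : ‖v‖ ≤ 1 := by
    simpa using (norm_add_le_max (v - 1) 1).trans (max_le hv.le norm_one.le)
  obtain ⟨u, rfl⟩ : ∃ u : ℤ_[p], (u : ℚ_[p]) = v := ⟨⟨v, hv1⟩, rfl⟩
  -- Hensel's lemma for `X ^ 2 - u` at `1`, where the derivative `2` is a unit since `p` is odd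
  have h2 : ‖(2 : ℤ_[p])‖ = 1 := by
    exact_mod_cast PadicInt.norm_natCast_eq_one_iff.2
      ((Nat.coprime_primes Fact.out Nat.prime_two).2 hp2)
  obtain ⟨z, hz, -⟩ := hensels_lemma (p := p) (F := X ^ 2 - C u) (a := 1) (by
    simp only [aeval_sub, coe_aeval_eq_eval, eval_pow, eval_X, one_pow, aeval_C,
      Algebra.algebraMap_self, RingHom.id_apply, derivative_sub, derivative_X_pow_succ,
      Nat.cast_one, map_add, map_one, pow_one, derivative_C, sub_zero, eval_mul, eval_add,
      eval_one, mul_one]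
    rwa [one_add_one_eq_two, h2, one_pow, PadicInt.norm_def, PadicInt.coe_sub,
      PadicInt.coe_one, norm_sub_rev])
  have hzu : (z : ℚ_[p]) ^ 2 = u := by
    rw [← PadicInt.coe_pow, sub_eq_zero.1 (by simpa using hz : z ^ 2 - u = 0)]
  exact ⟨z, by rw [← hzu, sq]⟩

lemma isSquare_of_norm_one_sub_mul_sq_lt_one (hp2 : p ≠ 2) {u w : ℚ_[p]}
    (h : ‖1 - u * w ^ 2‖ < 1) : IsSquare u := by
  have hw : w ≠ 0 := by rintro rfl; simp at h
  have hsq := isSquare_of_norm_sub_one_lt_one hp2 (by rwa [norm_sub_rev] : ‖u * w ^ 2 - 1‖ < 1)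
  simpa [hw] using hsq.div (IsSquare.sq w)

lemma norm_ratCast_le_one_of_mem_ZS {S : Finset ℕ} (hpS : p ∉ S) {q : ℚ} (hq : q ∈ ZS S) :
    ‖(q : ℚ_[p])‖ ≤ 1 :=
  (norm_le_one_iff_val_nonneg _).2 (by rw [valuation_ratCast]; exact hq p Fact.out hpS)

lemma norm_eq_one_or_of_coprimeZS {S : Finset ℕ} (hpS : p ∉ S) {c d : ℚ}
    (hc : ‖(c : ℚ_[p])‖ ≤ 1) (hd : ‖(d : ℚ_[p])‖ ≤ 1) (hcd : CoprimeZS S c d) :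
    ‖(c : ℚ_[p])‖ = 1 ∨ ‖(d : ℚ_[p])‖ = 1 := by
  obtain ⟨u, v, hu, hv, huv⟩ := hcd
  have huv' : (u : ℚ_[p]) * c + v * d = 1 := by exact_mod_cast huv
  have hmax := norm_mul_add_mul_le_max (norm_ratCast_le_one_of_mem_ZS hpS hu)
    (norm_ratCast_le_one_of_mem_ZS hpS hv) (c : ℚ_[p]) (d : ℚ_[p])
  rw [huv', norm_one] at hmax
  rcases le_max_iff.1 hmax with h | h
  exacts [Or.inl (hc.antisymm h), Or.inr (hd.antisymm h)]

lemma valuation_eq_zero_of_norm_eq_one {x : ℚ_[p]} (hx : ‖x‖ = 1) : x.valuation = 0 := by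
  have h1 := (norm_le_one_iff_val_nonneg x).1 hx.le
  have h2 := (norm_le_one_iff_val_nonneg x⁻¹).1 (by rw [norm_inv, hx, inv_one])
  rw [valuation_inv] at h2
  omega

end Padic

section PadicPoints

open Padic

variable {p : ℕ} [Fact p.Prime] {I : Type*} {cc dd : I → ℚ}

lemma isSquare_mul_pJ_of_norm_one_sub_lt_one (hp2 : p ≠ 2)
    (hcc : ∀ j, ‖(cc j : ℚ_[p])‖ ≤ 1) (hdd : ∀ j, ‖(dd j : ℚ_[p])‖ ≤ 1)
    {J : Finset I} (hJ : Even J.card) {β μ t s t₀ s₀ y : ℚ_[p]} (hβ : ‖β‖ ≤ 1) (hy : ‖y‖ ≤ 1)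
    (ht : ‖t‖ ≤ 1) (hs : ‖s‖ ≤ 1) (ht₀ : ‖μ * t₀‖ ≤ 1) (hs₀ : ‖μ * s₀‖ ≤ 1)
    (htt₀ : ‖t - μ * t₀‖ < 1) (hss₀ : ‖s - μ * s₀‖ < 1)
    (hE : ‖1 - β * pJ cc dd J t s * y ^ 2‖ < 1) :
    IsSquare (β * pJ cc dd J t₀ s₀) := by
  obtain ⟨k, hk⟩ := hJ
  have happrox := norm_pJ_sub_pJ_lt_one hcc hdd J ht hs ht₀ hs₀ htt₀ hss₀
  rw [pJ_mul_mul, hk, ← two_mul, pow_mul'] at happrox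
  refine isSquare_of_norm_one_sub_mul_sq_lt_one hp2 (w := μ ^ k * y) ?_
  rw [show 1 - β * pJ cc dd J t₀ s₀ * (μ ^ k * y) ^ 2 = (1 - β * pJ cc dd J t s * y ^ 2) +
    β * y ^ 2 * (pJ cc dd J t s - (μ ^ k) ^ 2 * pJ cc dd J t₀ s₀) by ring]
  refine (norm_add_le_max _ _).trans_lt (max_lt hE ?_)
  rw [norm_mul]
  exact mul_lt_one_of_nonneg_of_lt_one_right
    (by rw [norm_mul, norm_pow]
        exact mul_le_one₀ hβ (by positivity) (pow_le_one₀ (norm_nonneg _) hy))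
    (norm_nonneg _) happrox

lemma isSquare_mul_Dgen_of_norm_lt_one (hp2 : p ≠ 2) [Fintype I] [DecidableEq I]
    (hcc : ∀ j, ‖(cc j : ℚ_[p])‖ ≤ 1) (hdd : ∀ j, ‖(dd j : ℚ_[p])‖ ≤ 1)
    (hunit : ∀ j, ‖(cc j : ℚ_[p])‖ = 1 ∨ ‖(dd j : ℚ_[p])‖ = 1)
    {a b : ℚ} (ha : ‖(a : ℚ_[p])‖ ≤ 1) (hb : ‖(b : ℚ_[p])‖ ≤ 1)
    {A : Finset I} (hA : Even A.card) (hB : Even Aᶜ.card)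
    {t s x y : ℚ_[p]} (ht : ‖t‖ ≤ 1) (hs : ‖s‖ ≤ 1) (hx : ‖x‖ ≤ 1) (hy : ‖y‖ ≤ 1)
    (heq : EqnE cc dd A a b t s x y) {i : I}
    (hi : ‖(cc i : ℚ_[p]) * t + (dd i : ℚ_[p]) * s‖ < 1) :
    IsSquare ((a * Dgen cc dd (a * b) A i : ℚ) : ℚ_[p]) := by
  obtain ⟨μ, hμ, htμ, hsμ⟩ := exists_near_mul_of_norm_mul_add_mul_lt_one (hunit i) ht hs hi
  have hμd : ‖μ * (dd i : ℚ_[p])‖ ≤ 1 := by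
    rw [norm_mul]; exact mul_le_one₀ hμ (norm_nonneg _) (hdd i)
  have hμc : ‖μ * -(cc i : ℚ_[p])‖ ≤ 1 := by
    rw [norm_mul, norm_neg]; exact mul_le_one₀ hμ (norm_nonneg _) (hcc i)
  have hsmall : ∀ {J : Finset I} {β z : ℚ_[p]}, i ∈ J → ‖β‖ ≤ 1 → ‖z‖ ≤ 1 →
      ‖β * pJ cc dd J t s * z ^ 2‖ < 1 := fun hiJ hβ hz => by
    rw [norm_mul, norm_mul, norm_pow]
    exact mul_lt_one_of_nonneg_of_lt_one_left (by positivity)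
      (mul_lt_one_of_nonneg_of_lt_one_right hβ (norm_nonneg _)
        (norm_pJ_lt_one_of_mem hcc hdd hiJ ht hs hi)) (pow_le_one₀ (norm_nonneg _) hz)
  unfold EqnE at heq
  rw [Dgen]
  split_ifs with hiA
  · have hsq := isSquare_mul_pJ_of_norm_one_sub_lt_one hp2 hcc hdd hB hb hy ht hs hμd hμc htμ hsμ
      (by rw [show 1 - (b : ℚ_[p]) * pJ cc dd Aᶜ t s * y ^ 2 = a * pJ cc dd A t s * x ^ 2 by
        linear_combination -heq]; exact hsmall hiA ha hx)
    push_cast [ratCast_pJ]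
    simpa only [mul_assoc] using (IsSquare.mul_self (a : ℚ_[p])).mul hsq
  · have hsq := isSquare_mul_pJ_of_norm_one_sub_lt_one hp2 hcc hdd hA ha hx ht hs hμd hμc htμ hsμ
      (by rw [show 1 - (a : ℚ_[p]) * pJ cc dd A t s * x ^ 2 = b * pJ cc dd Aᶜ t s * y ^ 2 by
        linear_combination -heq]; exact hsmall (Finset.mem_compl.2 hiA) hb hy)
    push_cast [ratCast_pJ]
    exact hsq

lemma isSquare_mul_Dgen_or_norm_eq_one (hp2 : p ≠ 2) [Fintype I] [DecidableEq I]
    (hcc : ∀ j, ‖(cc j : ℚ_[p])‖ ≤ 1) (hdd : ∀ j, ‖(dd j : ℚ_[p])‖ ≤ 1)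
    (hunit : ∀ j, ‖(cc j : ℚ_[p])‖ = 1 ∨ ‖(dd j : ℚ_[p])‖ = 1)
    {a b : ℚ} (ha : ‖(a : ℚ_[p])‖ ≤ 1) (hb : ‖(b : ℚ_[p])‖ ≤ 1)
    {A : Finset I} (hA : Even A.card) (hB : Even Aᶜ.card)
    {t s x y : ℚ_[p]} (ht : ‖t‖ ≤ 1) (hs : ‖s‖ ≤ 1) (hx : ‖x‖ ≤ 1) (hy : ‖y‖ ≤ 1)
    (heq : EqnE cc dd A a b t s x y) (i : I) :
    IsSquare ((a * Dgen cc dd (a * b) A i : ℚ) : ℚ_[p]) ∨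
      ‖(cc i : ℚ_[p]) * t + (dd i : ℚ_[p]) * s‖ = 1 :=
  or_iff_not_imp_right.2 fun hne =>
    isSquare_mul_Dgen_of_norm_lt_one hp2 hcc hdd hunit ha hb hA hB ht hs hx hy heq
      ((norm_linear_le_one hcc hdd ht hs i).lt_of_ne hne)

end PadicPoints

theorem stmt_10_general (S₀ : Finset ℕ)
    {I : Type*} [Fintype I] [DecidableEq I]
    (cc dd : I → ℚ) (hcc : ∀ i, cc i ∈ ZS S₀) (hdd : ∀ i, dd i ∈ ZS S₀)
    (hcop : ∀ i, CoprimeZS S₀ (cc i) (dd i))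
    (a b : ℚ) (ha : a ∈ ZS S₀) (hb : b ∈ ZS S₀)
    (A : Finset I) (hA : Even A.card) (hB : Even Aᶜ.card)
    (p : ℕ) (hp : p.Prime) (hpodd : p ≠ 2) (hpS : p ∉ S₀)
    (t s x y : Qp p hp) (ht : ‖t‖ ≤ 1) (hs : ‖s‖ ≤ 1) (hx : ‖x‖ ≤ 1) (hy : ‖y‖ ≤ 1)
    (heq : EqnE cc dd A a b t s x y) :
    (∀ i : I, IsSquare ((a * Dgen cc dd (a * b) A i : ℚ) : Qp p hp) ∨
        ‖(cc i : Qp p hp) * t + (dd i : Qp p hp) * s‖ = 1) ∧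
      (∀ i : I, ¬ IsSquare ((a * Dgen cc dd (a * b) A i : ℚ) : Qp p hp) →
        Even (QpVal p hp ((cc i : Qp p hp) * t + (dd i : Qp p hp) * s))) := by
  let : Fact p.Prime := ⟨hp⟩
  have hZS : ∀ q ∈ ZS S₀, ‖(q : ℚ_[p])‖ ≤ 1 := fun q hq =>
    Padic.norm_ratCast_le_one_of_mem_ZS hpS hq
  have hcc' : ∀ i, ‖(cc i : ℚ_[p])‖ ≤ 1 := fun i => hZS _ (hcc i)
  have hdd' : ∀ i, ‖(dd i : ℚ_[p])‖ ≤ 1 := fun i => hZS _ (hdd i)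
  have hsq_or_unit := isSquare_mul_Dgen_or_norm_eq_one hpodd hcc' hdd'
    (fun i => Padic.norm_eq_one_or_of_coprimeZS hpS (hcc' i) (hdd' i) (hcop i))
    (hZS a ha) (hZS b hb) hA hB ht hs hx hy heq
  refine ⟨hsq_or_unit, fun i hi => ?_⟩
  have hval : QpVal p hp ((cc i : Qp p hp) * t + (dd i : Qp p hp) * s) = 0 :=
    Padic.valuation_eq_zero_of_norm_eq_one ((hsq_or_unit i).resolve_left hi)
  rw [hval]
  exact Even.zero

/-- If `(t,s,x,y)` is an integral `ℤ_p`-point of `E` (for a good odd prime `p`), then for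
every `i` either `a·D^𝓐_i` is a square in `ℚ_p` or `val_p(p_i(t,s)) = 0`; in particular
`val_p(p_i(t,s))` is even whenever `a·D^𝓐_i` is not a square in `ℚ_p`. -/
theorem stmt_10 (S₀ : Finset ℕ) (hS₀ : ∀ p ∈ S₀, p.Prime)
    {I : Type*} [Fintype I] [DecidableEq I]
    (hIpos : 0 < Fintype.card I) (hIeven : Even (Fintype.card I))
    (cc dd : I → ℚ) (hcc : ∀ i, cc i ∈ ZS S₀) (hdd : ∀ i, dd i ∈ ZS S₀)
    (hcop : ∀ i, CoprimeZS S₀ (cc i) (dd i))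
    (hΔ : ∀ i j : I, i ≠ j → cc j * dd i - cc i * dd j ≠ 0)
    (a b : ℚ) (ha : a ∈ ZS S₀) (hb : b ∈ ZS S₀) (ha0 : a ≠ 0) (hb0 : b ≠ 0)
    (A : Finset I) (hA : Even A.card) (hB : Even Aᶜ.card)
    (p : ℕ) (hp : p.Prime) (hpodd : p ≠ 2) (hpS : p ∉ S₀)
    (hvd : padicValRat p (a * b) = 0)
    (hvΔ : ∀ i j : I, i ≠ j → padicValRat p (cc j * dd i - cc i * dd j) = 0)
    (t s x y : Qp p hp) (ht : ‖t‖ ≤ 1) (hs : ‖s‖ ≤ 1) (hx : ‖x‖ ≤ 1) (hy : ‖y‖ ≤ 1)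
    (hprim : ‖t‖ = 1 ∨ ‖s‖ = 1)
    (heq : EqnE cc dd A a b t s x y) :
    (∀ i : I, IsSquare ((a * Dgen cc dd (a * b) A i : ℚ) : Qp p hp) ∨
        ‖(cc i : Qp p hp) * t + (dd i : Qp p hp) * s‖ = 1) ∧
      (∀ i : I, ¬ IsSquare ((a * Dgen cc dd (a * b) A i : ℚ) : Qp p hp) →
        Even (QpVal p hp ((cc i : Qp p hp) * t + (dd i : Qp p hp) * s))) :=
  stmt_10_general S₀ cc dd hcc hdd hcop a b ha hb A hA hB p hp hpodd hpS t s x y ht hs hx hy heq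
end
end

section
/- Assume |𝓘| ≤ 4. Let p > 5 be a prime not in S_0 with val_p(a) = 1 and val_p(b) = 0 (so val_p(d) = 1). If there exists an integral ℤ_p-point of E, i.e. (t,s,x,y) ∈ ℤ_p⁴ with t, s not both in p·ℤ_p and a·p_𝓐(t,s)·x² + b·p_𝓑(t,s)·y² = 1, then there exists such a tuple (t',s',x',y') which in addition satisfies val_p(p_𝓘(t',s')) = 0, equivalently val_p(d·p_𝓘(t',s')) = 1. -/
noncomputable section

/-!
Reducing modulo `p` kills the `a`-term, since `val_p(a) = 1`. If `𝓐 = ∅` the given point already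
works, as `b·p_𝓘(t,s)·y² = 1 - a·x²` is a unit. Otherwise `|𝓑| ≤ 2`, and the reduction of the given
point is an `𝔽_p`-point of `b·p_𝓑(t,s)·y² = 1`. It can be moved off the (at most four) lines
`c_i t + d_i s = 0`, because `p ≥ 7` exceeds the number of values to avoid: if the two forms of `𝓑`
are independent modulo `p`, use them as coordinates `u, v` and solve `b·u·v = 1`; if they are
proportional, `b·p_𝓑` is a constant times the square of one of them, and the given point shows that
this constant is a square. Hensel's lemma lifts the new point, with `x' = 0`.
-/

open Finset

/-- `pJ` over an arbitrary commutative ring, such as `ℤ_[p]` or `ZMod p`. -/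
def linProd {I R : Type*} [CommRing R] (C D : I → R) (J : Finset I) (t s : R) : R :=
  ∏ j ∈ J, (C j * t + D j * s)

lemma map_linProd {I R R' : Type*} [CommRing R] [CommRing R'] (f : R →+* R') (C D : I → R)
    (J : Finset I) (t s : R) :
    f (linProd C D J t s) = linProd (f ∘ C) (f ∘ D) J (f t) (f s) := by
  simp [linProd, map_prod]

section FiniteField

variable {K ι : Type*} [Field K] [Fintype K]

lemma card_filter_mul_sq_add_eq_zero_le_two [DecidableEq K] {α γ : K} (h : α ≠ 0 ∨ γ ≠ 0) :
    #{u | α * u ^ 2 + γ = 0} ≤ 2 := by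
  rcases (filter (fun u : K => α * u ^ 2 + γ = 0) univ).eq_empty_or_nonempty with he | ⟨r, hr⟩
  · simp [he]
  · simp only [mem_filter, mem_univ, true_and] at hr
    have hα : α ≠ 0 := by
      rintro rfl
      exact h.resolve_left (not_not.2 rfl) (by simpa using hr)
    refine (card_le_card fun u hu => ?_).trans (card_le_two (a := r) (b := -r))
    simp only [mem_filter, mem_univ, true_and] at hu
    have : α * ((u - r) * (u + r)) = 0 := by linear_combination hu - hr
    rcases mul_eq_zero.1 ((mul_eq_zero.1 this).resolve_left hα) with h' | h'
    · simp [sub_eq_zero.1 h']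
    · simp [eq_neg_of_add_eq_zero_left h']

lemma exists_forall_mul_add_ne_zero [Fintype ι] (hcard : Fintype.card ι < Fintype.card K)
    {C D : ι → K} (h : ∀ i, C i ≠ 0 ∨ D i ≠ 0) : ∃ τ, ∀ i, C i * τ + D i ≠ 0 := by
  classical
  obtain ⟨τ, -, hτ⟩ := exists_mem_notMem_of_card_lt_card
    (s := univ.image fun i => -D i / C i) (t := univ) (card_image_le.trans_lt (by simpa))
  refine ⟨τ, fun i hi => ?_⟩
  rcases eq_or_ne (C i) 0 with hC | hC
  · exact (h i).resolve_left (not_not.2 hC) (by simpa [hC] using hi)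
  · exact hτ (mem_image.2 ⟨i, mem_univ _, by field_simp; linear_combination -hi⟩)

lemma exists_ne_zero_forall_mul_sq_add_ne_zero {J : Finset ι}
    (hJ : 2 * #J + 1 < Fintype.card K) {α γ : ι → K} (h : ∀ j ∈ J, α j ≠ 0 ∨ γ j ≠ 0) :
    ∃ u ≠ 0, ∀ j ∈ J, α j * u ^ 2 + γ j ≠ 0 := by
  classical
  set bad := insert 0 (J.biUnion fun j => {u | α j * u ^ 2 + γ j = 0})
  have hbad : #bad < #(univ : Finset K) :=
    calc #bad ≤ #(J.biUnion fun j => {u | α j * u ^ 2 + γ j = 0}) + 1 := card_insert_le _ _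
      _ ≤ ∑ _j ∈ J, 2 + 1 := by
        gcongr
        exact card_biUnion_le.trans
          (sum_le_sum fun j hj => card_filter_mul_sq_add_eq_zero_le_two (h j hj))
      _ < #(univ : Finset K) := by simpa [mul_comm] using hJ
  obtain ⟨u, -, hu⟩ := exists_mem_notMem_of_card_lt_card hbad
  exact ⟨u, fun h0 => hu (h0 ▸ mem_insert_self _ _), fun j hj h0 =>
    hu (mem_insert_of_mem (mem_biUnion.2 ⟨j, hj, by simpa using h0⟩))⟩

lemma exists_mul_sq_eq_one_of_det_eq_zero [Fintype ι] (hcard : Fintype.card ι < Fintype.card K)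
    {C D : ι → K} (h : ∀ i, C i ≠ 0 ∨ D i ≠ 0) {i₁ i₂ : ι}
    (hΔ : C i₁ * D i₂ - C i₂ * D i₁ = 0) {β t₀ s₀ y₀ : K}
    (h₀ : β * ((C i₁ * t₀ + D i₁ * s₀) * (C i₂ * t₀ + D i₂ * s₀)) * y₀ ^ 2 = 1) :
    ∃ t s y, (∀ i, C i * t + D i * s ≠ 0) ∧
      β * ((C i₁ * t + D i₁ * s) * (C i₂ * t + D i₂ * s)) * y ^ 2 = 1 := by
  obtain ⟨τ, hτ⟩ := exists_forall_mul_add_ne_zero hcard h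
  have hτ' : ∀ i, C i * τ + D i * 1 ≠ 0 := by simpa using hτ
  -- `Δ = 0` makes the ratio of the two forms constant
  have hratio : (C i₁ * τ + D i₁ * 1) * (C i₂ * t₀ + D i₂ * s₀) =
      (C i₂ * τ + D i₂ * 1) * (C i₁ * t₀ + D i₁ * s₀) := by
    linear_combination (τ * s₀ - t₀) * hΔ
  refine ⟨τ, 1, y₀ * (C i₁ * t₀ + D i₁ * s₀) / (C i₁ * τ + D i₁ * 1), hτ', ?_⟩
  have hL₁ := hτ' i₁
  generalize C i₁ * τ + D i₁ * 1 = L₁ at hratio hL₁ ⊢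
  generalize C i₂ * τ + D i₂ * 1 = L₂ at hratio ⊢
  generalize C i₁ * t₀ + D i₁ * s₀ = M₁ at hratio h₀ ⊢
  generalize C i₂ * t₀ + D i₂ * s₀ = M₂ at hratio h₀
  field_simp
  linear_combination L₁ * h₀ - (β * y₀ ^ 2 * M₁) * hratio

lemma exists_mul_eq_one_of_det_ne_zero [Fintype ι] [DecidableEq ι] (hK : 5 < Fintype.card K)
    (hι : Fintype.card ι ≤ 4) {C D : ι → K} (h : ∀ i, C i ≠ 0 ∨ D i ≠ 0) {i₁ i₂ : ι}
    (hne : i₁ ≠ i₂) (hΔ : C i₁ * D i₂ - C i₂ * D i₁ ≠ 0) {β : K} (hβ : β ≠ 0) :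
    ∃ t s, (∀ i, C i * t + D i * s ≠ 0) ∧
      β * ((C i₁ * t + D i₁ * s) * (C i₂ * t + D i₂ * s)) = 1 := by
  set Δ := C i₁ * D i₂ - C i₂ * D i₁
  -- in the coordinates `u = L₁`, `v = L₂` the form `L_j` is `(α j * u + γ j * v) / Δ`
  set α : ι → K := fun j => C j * D i₂ - D j * C i₂
  set γ : ι → K := fun j => D j * C i₁ - C j * D i₁
  have hαγ : ∀ j, α j ≠ 0 ∨ γ j ≠ 0 := by
    intro j
    by_contra! hzero
    have hC : C j * Δ = 0 := by linear_combination C i₁ * hzero.1 + C i₂ * hzero.2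
    have hD : D j * Δ = 0 := by linear_combination D i₁ * hzero.1 + D i₂ * hzero.2
    exact (h j).elim (· ((mul_eq_zero.1 hC).resolve_right hΔ))
      (· ((mul_eq_zero.1 hD).resolve_right hΔ))
  have hJ : 2 * #({i₁, i₂}ᶜ : Finset ι) + 1 < Fintype.card K := by
    rw [card_compl, card_pair hne]
    omega
  obtain ⟨u, hu, hgood⟩ := exists_ne_zero_forall_mul_sq_add_ne_zero hJ
    (α := fun j => α j * β) (γ := γ) fun j _ => (hαγ j).imp_left (mul_ne_zero · hβ)
  have hgood' : ∀ j, α j * β * u ^ 2 + γ j ≠ 0 := by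
    intro j
    by_cases hj : j ∈ ({i₁, i₂}ᶜ : Finset ι)
    · exact hgood j hj
    obtain rfl | rfl : j = i₁ ∨ j = i₂ := by simpa [or_iff_not_imp_left] using hj
    · have : α j * β * u ^ 2 + γ j = Δ * β * u ^ 2 := by simp only [α, γ, Δ]; ring
      rw [this]
      exact mul_ne_zero (mul_ne_zero hΔ hβ) (pow_ne_zero 2 hu)
    · have : α j * β * u ^ 2 + γ j = Δ := by simp only [α, γ, Δ]; ring
      rwa [this]
  set v := (β * u)⁻¹
  have hv : β * u * v = 1 := mul_inv_cancel₀ (mul_ne_zero hβ hu)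
  clear_value v
  set t := (u * D i₂ - v * D i₁) / Δ
  set s := (v * C i₁ - u * C i₂) / Δ
  have hL : ∀ j, (C j * t + D j * s) * Δ = α j * u + γ j * v := by
    intro j
    simp only [t, s]
    field_simp
    ring
  refine ⟨t, s, fun j hj => ?_, ?_⟩
  · refine hgood' j ?_
    linear_combination -(β * u) * (hL j) + (β * u * Δ) * hj - γ j * hv
  · have h₁ : C i₁ * t + D i₁ * s = u :=
      mul_right_cancel₀ hΔ (by rw [hL]; simp only [α, γ, Δ]; ring)
    have h₂ : C i₂ * t + D i₂ * s = v :=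
      mul_right_cancel₀ hΔ (by rw [hL]; simp only [α, γ, Δ]; ring)
    rw [h₁, h₂, ← mul_assoc, hv]

theorem exists_linProd_ne_zero_of_mul_sq_eq_one [Fintype ι] [DecidableEq ι]
    (hK : 5 < Fintype.card K) (hι : Fintype.card ι ≤ 4) {C D : ι → K}
    (h : ∀ i, C i ≠ 0 ∨ D i ≠ 0) {B : Finset ι} (hB : #B ≤ 2) (hBeven : Even #B) {β : K}
    (hsol : ∃ t s y, β * linProd C D B t s * y ^ 2 = 1) :
    ∃ t s y, linProd C D univ t s ≠ 0 ∧ β * linProd C D B t s * y ^ 2 = 1 := by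
  obtain ⟨t₀, s₀, y₀, h₀⟩ := hsol
  simp only [linProd, prod_ne_zero_iff, mem_univ, forall_const] at h₀ ⊢
  obtain hB0 | hB2 : #B = 0 ∨ #B = 2 := by
    obtain ⟨k, hk⟩ := hBeven
    omega
  · obtain rfl := card_eq_zero.1 hB0
    obtain ⟨τ, hτ⟩ := exists_forall_mul_add_ne_zero (by omega) h
    exact ⟨τ, 1, y₀, by simpa using hτ, by simpa using h₀⟩
  · obtain ⟨i₁, i₂, hne, rfl⟩ := card_eq_two.1 hB2
    simp only [prod_pair hne] at h₀ ⊢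
    by_cases hΔ : C i₁ * D i₂ - C i₂ * D i₁ = 0
    · exact exists_mul_sq_eq_one_of_det_eq_zero (by omega) h hΔ h₀
    · have hβ : β ≠ 0 := by
        rintro rfl
        simp at h₀
      obtain ⟨t, s, hts, h₁⟩ := exists_mul_eq_one_of_det_ne_zero hK hι h hne hΔ hβ
      exact ⟨t, s, 1, hts, by simpa using h₁⟩

end FiniteField

namespace PadicInt

variable {p : ℕ} [Fact p.Prime]

lemma toZMod_eq_zero_iff {x : ℤ_[p]} : toZMod x = 0 ↔ ¬IsUnit x := by
  rw [← RingHom.mem_ker, ker_toZMod, IsLocalRing.mem_maximalIdeal, mem_nonunits_iff]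

lemma toZMod_ne_zero_iff {x : ℤ_[p]} : toZMod x ≠ 0 ↔ IsUnit x := by
  rw [Ne, toZMod_eq_zero_iff, not_not]

theorem exists_mul_sq_eq_one (hp : p ≠ 2) {u : ℤ_[p]} {r : ZMod p} (h : toZMod u * r ^ 2 = 1) :
    ∃ z : ℤ_[p], u * z ^ 2 = 1 := by
  obtain ⟨a, rfl⟩ := ZMod.ringHom_surjective toZMod r
  have h2 : (2 : ZMod p) ≠ 0 := Ring.two_ne_zero (by rwa [ZMod.ringChar_zmod_n])
  have hu : toZMod u ≠ 0 := left_ne_zero_of_mul_eq_one h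
  have ha : toZMod a ≠ 0 := pow_ne_zero_iff two_ne_zero |>.1 (right_ne_zero_of_mul_eq_one h)
  set F : Polynomial ℤ_[p] := Polynomial.C u * Polynomial.X ^ 2 - 1
  have hF' : ‖(Polynomial.derivative F).aeval a‖ = 1 := by
    have : (Polynomial.derivative F).aeval a = 2 * u * a := by
      simp [F]
      ring
    rw [this, ← isUnit_iff, ← toZMod_ne_zero_iff, map_mul, map_mul, map_ofNat]
    exact mul_ne_zero (mul_ne_zero h2 hu) ha
  have hF : ‖F.aeval a‖ < ‖(Polynomial.derivative F).aeval a‖ ^ 2 := by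
    rw [hF', one_pow, ← mem_nonunits, mem_nonunits_iff, ← toZMod_eq_zero_iff]
    simp [F, h]
  obtain ⟨z, hz, -⟩ := hensels_lemma hF
  exact ⟨z, by simpa [F, sub_eq_zero] using hz⟩

variable {I : Type*} [Fintype I] [DecidableEq I]

theorem exists_point_isUnit_linProd (hp5 : 5 < p) (hI : Fintype.card I ≤ 4) {C D : I → ℤ_[p]}
    (hCD : ∀ i, IsUnit (C i) ∨ IsUnit (D i)) {α β : ℤ_[p]} (hα : ¬IsUnit α) {A : Finset I}
    (hA : Even #A) (hB : Even #Aᶜ) {T S X Y : ℤ_[p]} (hTS : IsUnit T ∨ IsUnit S)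
    (hE : α * linProd C D A T S * X ^ 2 + β * linProd C D Aᶜ T S * Y ^ 2 = 1) :
    ∃ T' S' X' Y' : ℤ_[p], (IsUnit T' ∨ IsUnit S') ∧
      α * linProd C D A T' S' * X' ^ 2 + β * linProd C D Aᶜ T' S' * Y' ^ 2 = 1 ∧
      IsUnit (linProd C D univ T' S') := by
  rcases A.eq_empty_or_nonempty with rfl | hAne
  · refine ⟨T, S, X, Y, hTS, hE, ?_⟩
    have hunit : IsUnit (β * linProd C D univ T S * Y ^ 2) := by
      rw [compl_empty] at hE
      rw [eq_sub_of_add_eq' hE]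
      refine IsLocalRing.isUnit_one_sub_self_of_mem_nonunits _ fun h => hα ?_
      exact isUnit_of_mul_isUnit_left (isUnit_of_mul_isUnit_left h)
    exact isUnit_of_mul_isUnit_right (isUnit_of_mul_isUnit_left hunit)
  have hred : toZMod β * linProd (toZMod ∘ C) (toZMod ∘ D) Aᶜ (toZMod T) (toZMod S) *
      toZMod Y ^ 2 = 1 := by
    simpa [map_linProd, toZMod_eq_zero_iff.2 hα] using congrArg toZMod hE
  have hAc : #Aᶜ ≤ 2 := by
    rw [card_compl]
    obtain ⟨k, hk⟩ := hA
    have := hAne.card_pos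
    omega
  obtain ⟨t, s, y, hts, hy⟩ := exists_linProd_ne_zero_of_mul_sq_eq_one
    (by rwa [ZMod.card]) hI (fun i => (hCD i).imp toZMod_ne_zero_iff.2 toZMod_ne_zero_iff.2)
    hAc hB ⟨_, _, _, hred⟩
  obtain ⟨T', rfl⟩ := ZMod.ringHom_surjective toZMod t
  obtain ⟨S', rfl⟩ := ZMod.ringHom_surjective toZMod s
  obtain ⟨Y', hY'⟩ := exists_mul_sq_eq_one (by omega) (u := β * linProd C D Aᶜ T' S')
    (by rwa [map_mul, map_linProd])
  have hunit : IsUnit (linProd C D univ T' S') := by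
    rwa [← toZMod_ne_zero_iff, map_linProd]
  refine ⟨T', S', 0, Y', ?_, by simpa using hY', hunit⟩
  obtain ⟨i, -⟩ := hAne
  by_contra! hnon
  have hL := IsUnit.prod_iff.1 hunit i (mem_univ i)
  rcases IsLocalRing.isUnit_or_isUnit_of_isUnit_add hL with h | h
  · exact hnon.1 (isUnit_of_mul_isUnit_right h)
  · exact hnon.2 (isUnit_of_mul_isUnit_right h)

end PadicInt

section SIntegers

variable {p : ℕ} [Fact p.Prime] {S : Finset ℕ}

lemma norm_ratCast_le_one_of_mem_ZS (hpS : p ∉ S) {q : ℚ} (hq : q ∈ ZS S) :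
    ‖(q : ℚ_[p])‖ ≤ 1 := by
  rw [Padic.norm_le_one_iff_val_nonneg, Padic.valuation_ratCast]
  exact hq p Fact.out hpS

lemma norm_ratCast_lt_one_of_padicValRat_pos {q : ℚ} (hq : 0 < padicValRat p q) :
    ‖(q : ℚ_[p])‖ < 1 := by
  have hq0 : q ≠ 0 := by
    rintro rfl
    simp at hq
  rw [Padic.norm_eq_zpow_neg_valuation (by exact_mod_cast hq0), Padic.valuation_ratCast]
  exact zpow_lt_one_of_neg₀ (by exact_mod_cast (Fact.out : p.Prime).one_lt) (neg_neg_of_pos hq)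

lemma isUnit_or_isUnit_of_coprimeZS (hpS : p ∉ S) {c d : ℚ} {C D : ℤ_[p]}
    (hC : (C : ℚ_[p]) = c) (hD : (D : ℚ_[p]) = d) (hcd : CoprimeZS S c d) :
    IsUnit C ∨ IsUnit D := by
  obtain ⟨u, v, hu, hv, huv⟩ := hcd
  have h : (⟨u, norm_ratCast_le_one_of_mem_ZS hpS hu⟩ * C +
      ⟨v, norm_ratCast_le_one_of_mem_ZS hpS hv⟩ * D : ℤ_[p]) = 1 :=
    PadicInt.ext (show (u : ℚ_[p]) * C + v * D = 1 by rw [hC, hD]; exact_mod_cast huv)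
  exact (IsLocalRing.isUnit_or_isUnit_of_isUnit_add (h ▸ isUnit_one)).imp
    isUnit_of_mul_isUnit_right isUnit_of_mul_isUnit_right

variable {I : Type*} {cc dd : I → ℚ} {C D : I → ℤ_[p]}

lemma coe_linProd (hC : ∀ i, (C i : ℚ_[p]) = cc i) (hD : ∀ i, (D i : ℚ_[p]) = dd i)
    (J : Finset I) (T S : ℤ_[p]) :
    ((linProd C D J T S : ℤ_[p]) : ℚ_[p]) = pJ cc dd J (T : ℚ_[p]) S := by
  simp only [linProd, pJ, ← hC, ← hD]
  exact map_prod PadicInt.Coe.ringHom _ _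

lemma eqnE_coe_iff [Fintype I] [DecidableEq I] (hC : ∀ i, (C i : ℚ_[p]) = cc i)
    (hD : ∀ i, (D i : ℚ_[p]) = dd i) {a b : ℚ} {α β : ℤ_[p]} (hα : (α : ℚ_[p]) = a)
    (hβ : (β : ℚ_[p]) = b) (A : Finset I) (T S X Y : ℤ_[p]) :
    EqnE cc dd A a b (T : ℚ_[p]) S X Y ↔
      α * linProd C D A T S * X ^ 2 + β * linProd C D Aᶜ T S * Y ^ 2 = 1 := by
  rw [EqnE, ← hα, ← hβ, ← coe_linProd hC hD, ← coe_linProd hC hD]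
  norm_cast
  exact ⟨fun h => PadicInt.ext h, fun h => by rw [h]; rfl⟩

end SIntegers

theorem stmt_13_general (S₀ : Finset ℕ)
    {I : Type*} [Fintype I] [DecidableEq I]
    (hIle : Fintype.card I ≤ 4)
    (cc dd : I → ℚ) (hcc : ∀ i, cc i ∈ ZS S₀) (hdd : ∀ i, dd i ∈ ZS S₀)
    (hcop : ∀ i, CoprimeZS S₀ (cc i) (dd i))
    (a b : ℚ) (hb : b ∈ ZS S₀)
    (A : Finset I) (hA : Even A.card) (hB : Even Aᶜ.card)
    (p : ℕ) (hp : p.Prime) (hp5 : 5 < p) (hpS : p ∉ S₀)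
    (hva : padicValRat p a = 1)
    (hpt : ∃ t s x y : Qp p hp, ‖t‖ ≤ 1 ∧ ‖s‖ ≤ 1 ∧ ‖x‖ ≤ 1 ∧ ‖y‖ ≤ 1 ∧
      (‖t‖ = 1 ∨ ‖s‖ = 1) ∧ EqnE cc dd A a b t s x y) :
    ∃ t' s' x' y' : Qp p hp, ‖t'‖ ≤ 1 ∧ ‖s'‖ ≤ 1 ∧ ‖x'‖ ≤ 1 ∧ ‖y'‖ ≤ 1 ∧
      (‖t'‖ = 1 ∨ ‖s'‖ = 1) ∧ EqnE cc dd A a b t' s' x' y' ∧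
      ‖pJ cc dd Finset.univ t' s'‖ = 1 := by
  have : Fact p.Prime := ⟨hp⟩
  have hZS : ∀ {q : ℚ}, q ∈ ZS S₀ → ‖(q : ℚ_[p])‖ ≤ 1 := norm_ratCast_le_one_of_mem_ZS hpS
  have ha : ‖(a : ℚ_[p])‖ < 1 :=
    norm_ratCast_lt_one_of_padicValRat_pos (hva ▸ one_pos)
  set C : I → ℤ_[p] := fun i => ⟨cc i, hZS (hcc i)⟩
  set D : I → ℤ_[p] := fun i => ⟨dd i, hZS (hdd i)⟩
  have hC : ∀ i, (C i : ℚ_[p]) = cc i := fun _ => rfl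
  have hD : ∀ i, (D i : ℚ_[p]) = dd i := fun _ => rfl
  have hEq := eqnE_coe_iff hC hD (α := ⟨a, ha.le⟩) (β := ⟨b, hZS hb⟩) rfl rfl A
  obtain ⟨t, s, x, y, ht, hs, hx, hy, hts, hE⟩ := hpt
  obtain ⟨T, S, X, Y, hTS, hE', hunit⟩ := PadicInt.exists_point_isUnit_linProd hp5 hIle
    (fun i => isUnit_or_isUnit_of_coprimeZS hpS (hC i) (hD i) (hcop i))
    (PadicInt.isUnit_iff.not.2 ha.ne) hA hB (T := ⟨t, ht⟩) (S := ⟨s, hs⟩)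
    (hts.imp PadicInt.isUnit_iff.2 PadicInt.isUnit_iff.2) ((hEq _ _ ⟨x, hx⟩ ⟨y, hy⟩).1 hE)
  refine ⟨(T : ℚ_[p]), (S : ℚ_[p]), (X : ℚ_[p]), (Y : ℚ_[p]), T.norm_le_one, S.norm_le_one,
    X.norm_le_one, Y.norm_le_one, hTS.imp PadicInt.isUnit_iff.1 PadicInt.isUnit_iff.1,
    (hEq T S X Y).2 hE', ?_⟩
  exact (congrArg norm (coe_linProd hC hD univ T S)).symm.trans (PadicInt.isUnit_iff.1 hunit)

/-- If `|𝓘| ≤ 4`, `p > 5` is a prime outside `S₀` with `val_p(a) = 1` and `val_p(b) = 0`,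
and `E` has an integral `ℤ_p`-point, then it has one with `val_p(p_𝓘(t',s')) = 0`
(equivalently `val_p(d·p_𝓘(t',s')) = 1`). -/
theorem stmt_13 (S₀ : Finset ℕ) (hS₀ : ∀ p ∈ S₀, p.Prime)
    {I : Type*} [Fintype I] [DecidableEq I]
    (hIpos : 0 < Fintype.card I) (hIeven : Even (Fintype.card I))
    (hIle : Fintype.card I ≤ 4)
    (cc dd : I → ℚ) (hcc : ∀ i, cc i ∈ ZS S₀) (hdd : ∀ i, dd i ∈ ZS S₀)
    (hcop : ∀ i, CoprimeZS S₀ (cc i) (dd i))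
    (hΔ : ∀ i j : I, i ≠ j → cc j * dd i - cc i * dd j ≠ 0)
    (a b : ℚ) (ha : a ∈ ZS S₀) (hb : b ∈ ZS S₀) (ha0 : a ≠ 0) (hb0 : b ≠ 0)
    (A : Finset I) (hA : Even A.card) (hB : Even Aᶜ.card)
    (p : ℕ) (hp : p.Prime) (hp5 : 5 < p) (hpS : p ∉ S₀)
    (hva : padicValRat p a = 1) (hvb : padicValRat p b = 0)
    (hpt : ∃ t s x y : Qp p hp, ‖t‖ ≤ 1 ∧ ‖s‖ ≤ 1 ∧ ‖x‖ ≤ 1 ∧ ‖y‖ ≤ 1 ∧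
      (‖t‖ = 1 ∨ ‖s‖ = 1) ∧ EqnE cc dd A a b t s x y) :
    ∃ t' s' x' y' : Qp p hp, ‖t'‖ ≤ 1 ∧ ‖s'‖ ≤ 1 ∧ ‖x'‖ ≤ 1 ∧ ‖y'‖ ≤ 1 ∧
      (‖t'‖ = 1 ∨ ‖s'‖ = 1) ∧ EqnE cc dd A a b t' s' x' y' ∧
      ‖pJ cc dd Finset.univ t' s'‖ = 1 :=
  stmt_13_general S₀ hIle cc dd hcc hdd hcop a b hb A hA hB p hp hp5 hpS hva hpt
end
end
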